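/- arXiv:2305.12803 — 2 statements merged into one kernel-verified Lean document; each statement's English description precedes it below -/
import Mathlib

section
/- For any finitary matroids M and N on a common ground set E, there exists an (M,N)-stable set I such that every (M,N)-stable set is contained in span_M(I). -/
/-!
Stable sets are closed under unions of chains (everything is finitary), so Zorn gives a
maximal stable set `I`. Given another stable set `J`, extend `I` to a maximal common
independent set `K` with `I ⊆ K ⊆ I ∪ J`. Maximality of `K` and stability of `I` force
`J ⊆ span_M(K)`; stability of `J` then shows that `K` is itself stable, so `K = I` and
`J ⊆ span_M(I)`.
-/

open Set Matroid
open scoped symmDiff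

namespace AZ

variable {α : Type*}

/-- The contraction `M / X`, defined (in the standard way) as the dual of the
restriction of the dual to the complement of `X`. -/
def con (M : Matroid α) (X : Set α) : Matroid α := (M✶ ↾ (M.E \ X))✶

/-- The deletion `M − X := M ↾ (E ∖ X)`. -/
def del (M : Matroid α) (X : Set α) : Matroid α := M ↾ (M.E \ X)

/-- The matroidal Hall condition `Hall(M,N)`: for every `X ⊆ E` such that `M ↾ X` has a
base that is independent in `N.X = N/(E∖X)`, also `N.X` has a base independent in `M ↾ X`. -/
def Hall (M N : Matroid α) : Prop :=
  ∀ X ⊆ N.E,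
    (∃ B, (M ↾ X).IsBase B ∧ (con N (N.E \ X)).Indep B) →
    ∃ B, (con N (N.E \ X)).IsBase B ∧ (M ↾ X).Indep B

/-- `(M,N)` is finitely matchable: every finite `F ⊆ E` is `N`-spanned by an
`M`-independent set. -/
def FinitelyMatchable (M N : Matroid α) : Prop :=
  ∀ F ⊆ M.E, F.Finite → ∃ I, M.Indep I ∧ F ⊆ N.closure I

/-- `G ⊆ E` is `(M,N)`-negligible: for all finite `X ⊆ G` and finite `Y ⊆ E ∖ G` there
is an `M/Y`-independent set that `N`-spans `X`. -/
def Negligible (M N : Matroid α) (G : Set α) : Prop :=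
  G ⊆ M.E ∧
    ∀ X ⊆ G, X.Finite → ∀ Y ⊆ M.E \ G, Y.Finite →
      ∃ I, (con M Y).Indep I ∧ X ⊆ N.closure I

/-- A common independent set `I` of `M` and `N` is `(M,N)`-stable if every `J ⊆ E ∖ I`
that is independent in `M/I` and in `N` is also independent in `N/I`. -/
def Stable (M N : Matroid α) (I : Set α) : Prop :=
  M.Indep I ∧ N.Indep I ∧
    ∀ J ⊆ M.E \ I, (con M I).Indep J → N.Indep J → (con N I).Indep J

/-- A circuit of a matroid: a minimal dependent subset of the ground set. -/
def Circuit (M : Matroid α) (C : Set α) : Prop :=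
  C ⊆ M.E ∧ ¬ M.Indep C ∧ ∀ D ⊂ C, M.Indep D

/-- The arc relation of the exchange digraph `D(I)`: for `x ∈ E ∖ I` and `y ∈ I` there is
an arc `x → y` if `x ∈ span_M(I)` and `y` lies in the unique `M`-circuit contained in
`I + x`, and an arc `y → x` if `x ∈ span_N(I)` and `y` lies in the unique `N`-circuit
contained in `I + x`. -/
def Arc (M N : Matroid α) (I : Set α) (x y : α) : Prop :=
  (x ∈ M.E \ I ∧ y ∈ I ∧ x ∈ M.closure I ∧
    ∃ C, Circuit M C ∧ C ⊆ insert x I ∧ x ∈ C ∧ y ∈ C) ∨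
  (x ∈ I ∧ y ∈ M.E \ I ∧ y ∈ N.closure I ∧
    ∃ C, Circuit N C ∧ C ⊆ insert y I ∧ y ∈ C ∧ x ∈ C)

/-- `Reach M N I x` is `E(x,I)`: the set of elements reachable from `x` by a directed
path in `D(I)`. -/
def Reach (M N : Matroid α) (I : Set α) (x : α) : Set α :=
  {y | Relation.ReflTransGen (Arc M N I) x y}

/-- `P = {f 0, …, f (2n)}` is an `xy`-augmenting path for `I`: it starts at
`x = f 0 ∉ span_N(I)`, ends at `y = f (2n) ∉ span_M(I)`, consecutive elements are joined
by arcs of `D(I)`, and there are no jumping arcs. -/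
def IsAugPath (M N : Matroid α) (I P : Set α) (x y : α) : Prop :=
  ∃ (n : ℕ) (f : ℕ → α),
    P = f '' Set.Iic (2 * n) ∧ P ⊆ M.E ∧ Set.InjOn f (Set.Iic (2 * n)) ∧
    f 0 = x ∧ f (2 * n) = y ∧
    x ∉ N.closure I ∧ y ∉ M.closure I ∧
    (∀ i < 2 * n, Arc M N I (f i) (f (i + 1))) ∧
    (∀ i j, i + 1 < j → j ≤ 2 * n → ¬ Arc M N I (f i) (f j))

/-- One augmentation step: `J = I △ P` for some augmenting path `P` for `I`. -/
def AugStep (M N : Matroid α) (I J : Set α) : Prop :=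
  ∃ P x y, IsAugPath M N I P x y ∧ J = I ∆ P

/-- `J ∈ A(I)`: `J` is obtained from `I` by finitely many successive augmentations. -/
def MemA (M N : Matroid α) (I J : Set α) : Prop :=
  Relation.ReflTransGen (AugStep M N) I J

/-- `O = {f 0, …, f (2n+1)}` is a switching cycle for `I`: the arcs of `D(I)` inside `O`
are exactly the arcs `f i → f (i+1 mod 2n+2)`, forming a chordless directed cycle. -/
def SwitchCycle (M N : Matroid α) (I O : Set α) : Prop :=
  ∃ (n : ℕ) (f : ℕ → α),
    O = f '' Set.Iio (2 * n + 2) ∧ O ⊆ M.E ∧ Set.InjOn f (Set.Iio (2 * n + 2)) ∧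
    ∀ i < 2 * n + 2, ∀ j < 2 * n + 2,
      (Arc M N I (f i) (f j) ↔ j = (i + 1) % (2 * n + 2))

/-- The preorder on finite common independent sets: `I ⊴ J` iff
`I ⊆ span_M(J) ∩ span_N(J)`. -/
def Le (M N : Matroid α) (I J : Set α) : Prop :=
  I ⊆ M.closure J ∩ N.closure J

/-- The equivalence relation: `I ∼ J` iff `I ⊴ J` and `J ⊴ I`. -/
def Sim (M N : Matroid α) (I J : Set α) : Prop :=
  Le M N I J ∧ Le M N J I

/-- A family of finite common independent sets of `M` and `N` that is closed under `∼`
and is `⊴`-directed. -/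
def DirFam (M N : Matroid α) (D : Set (Set α)) : Prop :=
  (∀ I ∈ D, I.Finite ∧ M.Indep I ∧ N.Indep I) ∧
  (∀ I ∈ D, ∀ J, J.Finite → M.Indep J → N.Indep J → Sim M N I J → J ∈ D) ∧
  (∀ I ∈ D, ∀ J ∈ D, ∃ K ∈ D, Le M N I K ∧ Le M N J K)

/-- A maximal directed family of finite common independent sets. -/
def MaxDirFam (M N : Matroid α) (D : Set (Set α)) : Prop :=
  DirFam M N D ∧ ∀ D', DirFam M N D' → D ⊆ D' → D' = D

lemma con_eq_contract (M : Matroid α) (X : Set α) : con M X = M ／ X := rfl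

lemma stable_iff {M N : Matroid α} {I : Set α} :
    Stable M N I ↔ M.Indep I ∧ N.Indep I ∧
      ∀ J, Disjoint J I → M.Indep (J ∪ I) → N.Indep J → N.Indep (J ∪ I) := by
  refine and_congr_right fun hIM => and_congr_right fun hIN => ?_
  simp only [con_eq_contract, hIM.contract_indep_iff, hIN.contract_indep_iff]
  refine ⟨fun h J hJI hJIM hJN => (h J ?_ ⟨hJI, hJIM⟩ hJN).2,
    fun h J _ ⟨hJI, hJIM⟩ hJN => ⟨hJI, h J hJI hJIM hJN⟩⟩
  exact subset_sdiff.2 ⟨subset_union_left.trans hJIM.subset_ground, hJI⟩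

lemma Stable.union_indep {M N : Matroid α} {I J : Set α} (h : Stable M N I)
    (hJI : Disjoint J I) (hM : M.Indep (J ∪ I)) (hN : N.Indep J) : N.Indep (J ∪ I) :=
  (stable_iff.1 h).2.2 J hJI hM hN

lemma stable_empty (M N : Matroid α) : Stable M N ∅ :=
  stable_iff.2 ⟨M.empty_indep, N.empty_indep, fun _ _ _ hN => by rwa [union_empty]⟩

lemma indep_sUnion_of_directedOn {M : Matroid α} [M.Finitary] {c : Set (Set α)}
    (hc : DirectedOn (· ⊆ ·) c) (h : ∀ I ∈ c, M.Indep I) : M.Indep (⋃₀ c) := by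
  rcases c.eq_empty_or_nonempty with rfl | hne
  · simp
  refine indep_of_forall_finite_subset_indep _ fun F hFc hF => ?_
  obtain ⟨I, hIc, hFI⟩ := DirectedOn.exists_mem_subset_of_finite_of_subset_sUnion hne hc hF hFc
  exact (h I hIc).subset hFI

lemma stable_sUnion_of_directedOn {M N : Matroid α} [M.Finitary] [N.Finitary]
    {c : Set (Set α)} (hc : DirectedOn (· ⊆ ·) c) (h : ∀ I ∈ c, Stable M N I) :
    Stable M N (⋃₀ c) := by
  rcases c.eq_empty_or_nonempty with rfl | hne
  · simpa using stable_empty M N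
  refine stable_iff.2 ⟨indep_sUnion_of_directedOn hc fun I hI => (h I hI).1,
    indep_sUnion_of_directedOn hc fun I hI => (h I hI).2.1, fun L hLc hM hN => ?_⟩
  refine indep_of_forall_finite_subset_indep _ fun F hF hFfin => ?_
  obtain ⟨I, hIc, hFI⟩ := DirectedOn.exists_mem_subset_of_finite_of_subset_sUnion hne hc
    (hFfin.inter_of_left (⋃₀ c)) inter_subset_right
  have hIc' : I ⊆ ⋃₀ c := subset_sUnion_of_mem hIc
  have hFLI : N.Indep ((F ∩ L) ∪ I) :=
    (h I hIc).union_indep (hLc.mono inter_subset_right hIc')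
      (hM.subset (union_subset_union inter_subset_right hIc')) (hN.subset inter_subset_right)
  refine hFLI.subset fun x hx => ?_
  rcases hF hx with hxL | hxc
  · exact Or.inl ⟨hx, hxL⟩
  · exact Or.inr (hFI ⟨hx, hxc⟩)

lemma exists_maximal_stable (M N : Matroid α) [M.Finitary] [N.Finitary] :
    ∃ I, Maximal (Stable M N) I := by
  refine zorn_subset _ fun c hc hchain => ?_
  exact ⟨⋃₀ c, stable_sUnion_of_directedOn hchain.directedOn fun I hI => hc hI,
    fun _ => subset_sUnion_of_mem⟩

lemma exists_maximal_common_indep_superset {M N : Matroid α} [M.Finitary] [N.Finitary]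
    {I X : Set α} (hIM : M.Indep I) (hIN : N.Indep I) (hIX : I ⊆ X) :
    ∃ K, I ⊆ K ∧ Maximal (fun K => M.Indep K ∧ N.Indep K ∧ K ⊆ X) K := by
  refine zorn_subset_nonempty {K | M.Indep K ∧ N.Indep K ∧ K ⊆ X}
    (fun c hc hchain hne => ?_) I ⟨hIM, hIN, hIX⟩
  exact ⟨⋃₀ c, ⟨indep_sUnion_of_directedOn hchain.directedOn fun K hK => (hc hK).1,
    indep_sUnion_of_directedOn hchain.directedOn fun K hK => (hc hK).2.1,
    sUnion_subset fun K hK => (hc hK).2.2⟩, fun _ => subset_sUnion_of_mem⟩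

lemma disjoint_closure_of_contract_indep {M : Matroid α} {K L : Set α}
    (hL : (M ／ K).Indep L) : Disjoint L (M.closure K) := by
  have hLK : Disjoint L K := (subset_sdiff.1 hL.subset_ground).2
  have hloops : Disjoint L (M.closure K \ K) := M.contract_loops_eq K ▸ hL.disjoint_loops
  exact (disjoint_union_right.2 ⟨hloops, hLK⟩).mono_right (subset_sdiff_union _ _)

lemma contract_indep_of_subset_closure {M : Matroid α} {J K L : Set α}
    (hL : (M ／ K).Indep L) (hJK : J ⊆ M.closure K) : (M ／ J).Indep L := by
  have hLcl : (M ／ M.closure K).Indep L := by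
    rw [contract_closure_eq_contract_delete, delete_indep_iff]
    exact ⟨hL, (disjoint_closure_of_contract_indep hL).mono_right sdiff_subset⟩
  rw [← union_eq_right.2 hJK, ← contract_contract] at hLcl
  exact hLcl.of_contract

section Augment

variable {M N : Matroid α} {I J K : Set α}

/-- If `j ∈ J` were not `M`-spanned by `K`, then `K + j` would still be `M`-independent, and
stability of `I` would make it `N`-independent too, since `(K + j) ∖ I ⊆ J`. -/
lemma subset_closure_of_maximal (hI : Stable M N I) (hJN : N.Indep J) (hJE : J ⊆ M.E)
    (hIK : I ⊆ K) (hK : Maximal (fun K => M.Indep K ∧ N.Indep K ∧ K ⊆ I ∪ J) K) :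
    J ⊆ M.closure K := by
  obtain ⟨hKM, -, hKIJ⟩ := hK.prop
  intro j hj
  by_contra hjK
  have hjK' : j ∉ K := fun h => hjK (M.subset_closure K hKM.subset_ground h)
  have hjKM : M.Indep (insert j K) := (hKM.insert_indep_iff_of_notMem hjK').2 ⟨hJE hj, hjK⟩
  have hIjK : I ⊆ insert j K := hIK.trans (subset_insert j K)
  have hjKI : insert j K \ I ⊆ J := by
    rintro x ⟨rfl | hxK, hxI⟩
    · exact hj
    · exact (hKIJ hxK).resolve_left hxI
  have hjKN : N.Indep (insert j K) := by
    simpa [sdiff_union_of_subset hIjK] using hI.union_indep disjoint_sdiff_left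
      (by rwa [sdiff_union_of_subset hIjK]) (hJN.subset hjKI)
  exact hjK' (hK.eq_of_subset ⟨hjKM, hjKN, insert_subset (Or.inr hj) hKIJ⟩
    (subset_insert j K) ▸ mem_insert j K)

/-- For `L` extending `K` independently in `M`, stability of `J ⊆ span_M(K)` makes `L ∪ J`
`N`-independent, and then stability of `I` applies to `(K ∖ I) ∪ L ⊆ J ∪ L`. -/
lemma stable_of_subset_closure (hI : Stable M N I) (hJ : Stable M N J) (hKM : M.Indep K)
    (hKN : N.Indep K) (hIK : I ⊆ K) (hKIJ : K ⊆ I ∪ J) (hJK : J ⊆ M.closure K) :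
    Stable M N K := by
  refine stable_iff.2 ⟨hKM, hKN, fun L hLK hLKM hLN => ?_⟩
  have hLcon : (M ／ K).Indep L := hKM.contract_indep_iff.2 ⟨hLK, hLKM⟩
  obtain ⟨hLJ, hLJM⟩ := hJ.1.contract_indep_iff.1 (contract_indep_of_subset_closure hLcon hJK)
  have hLJN : N.Indep (L ∪ J) := hJ.union_indep hLJ hLJM hLN
  have hKI : K \ I ⊆ J := fun x hx => (hKIJ hx.1).resolve_left hx.2
  have hsplit : (K \ I ∪ L) ∪ I = L ∪ K := by
    rw [union_right_comm, sdiff_union_of_subset hIK, union_comm]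
  rw [← hsplit]
  refine hI.union_indep (disjoint_union_left.2 ⟨disjoint_sdiff_left, hLK.mono_right hIK⟩)
    (hsplit ▸ hLKM) (hLJN.subset (union_subset (hKI.trans subset_union_right) subset_union_left))

end Augment

theorem statement8_general (M N : Matroid α) [M.Finitary] [N.Finitary] :
    ∃ I, Stable M N I ∧ ∀ J, Stable M N J → J ⊆ M.closure I := by
  obtain ⟨I, hI⟩ := exists_maximal_stable M N
  refine ⟨I, hI.prop, fun J hJ => ?_⟩
  obtain ⟨K, hIK, hK⟩ := exists_maximal_common_indep_superset hI.prop.1 hI.prop.2.1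
    (subset_union_left (t := J))
  have hJK : J ⊆ M.closure K :=
    subset_closure_of_maximal hI.prop hJ.2.1 hJ.1.subset_ground hIK hK
  obtain ⟨hKM, hKN, hKIJ⟩ := hK.prop
  have hKI : K = I := (hI.eq_of_subset
    (stable_of_subset_closure hI.prop hJ hKM hKN hIK hKIJ hJK) hIK).symm
  exact hKI ▸ hJK

/-- There exists an `(M,N)`-stable set that `M`-spans all `(M,N)`-stable sets. -/
theorem statement8 (M N : Matroid α) [M.Finitary] [N.Finitary] (hE : M.E = N.E) :
    ∃ I, Stable M N I ∧ ∀ J, Stable M N J → J ⊆ M.closure I :=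
  statement8_general M N

end AZ
end

section
/- If I and J are finite common independent sets of M and N with I ∼ J, and y ∈ E is reachable from x ∈ E by a directed path in the exchange digraph D(I), then y is reachable from x by a directed path in D(J). -/
open Set Matroid
open scoped symmDiff

/-!
Let `R` be the set of elements reachable from `u` in `D(J)`. Fundamental circuits show that
`I ∩ R ⊆ span_M(J ∩ R)` and `I ∖ R ⊆ span_N(J ∖ R)`; as `|I| = |J|`, counting turns both
inclusions into equalities of spans. An arc `u → v` of `D(I)` with `v ∉ R` would then put `u`
into `span_M(I ∩ R) ⊆ span_M(I - v)` (or, for an `N`-arc, `v` into `span_N(I - u)`), although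
`v` lies in the fundamental circuit of `u` (resp. `u` in that of `v`).
-/

lemma ENat.le_and_le_of_add_eq_add {a b c d : ℕ∞} (hac : a ≤ c) (hbd : b ≤ d)
    (h : a + b = c + d) (hab : a + b ≠ ⊤) : c ≤ a ∧ d ≤ b := by
  obtain ⟨hc, hd⟩ := WithTop.add_ne_top.1 (h ▸ hab)
  lift c to ℕ using hc
  lift d to ℕ using hd
  lift a to ℕ using ne_top_of_le_ne_top (natCast_ne_top c) hac
  lift b to ℕ using ne_top_of_le_ne_top (natCast_ne_top d) hbd
  norm_cast at *
  omega

namespace Matroid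

variable {α : Type*} {M : Matroid α} {X Y I T : Set α} {u v : α}

lemma Indep.encard_le_encard_of_subset_closure (hX : M.Indep X) (hXY : X ⊆ M.closure Y) :
    X.encard ≤ Y.encard :=
  calc X.encard = M.eRk X := hX.eRk_eq_encard.symm
    _ ≤ M.eRk (M.closure Y) := M.eRk_mono hXY
    _ = M.eRk Y := M.eRk_closure_eq Y
    _ ≤ Y.encard := M.eRk_le_encard Y

lemma Indep.closure_eq_closure_of_subset_closure_of_encard_le (hX : M.Indep X) (hXfin : X.Finite)
    (hXY : X ⊆ M.closure Y) (hYX : Y.encard ≤ X.encard) : M.closure X = M.closure Y := by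
  have hrk : M.eRk (M.closure Y) ≤ M.eRk X := by
    rw [eRk_closure_eq, hX.eRk_eq_encard]
    exact (M.eRk_le_encard Y).trans hYX
  rw [(M.isRkFinite_of_finite hXfin).closure_eq_closure_of_subset_of_eRk_ge_eRk hXY hrk,
    closure_closure]

lemma mem_of_mem_fundCircuit (hv : v ∈ M.fundCircuit u I) (hvu : v ≠ u) (hTI : T ⊆ I)
    (hu : u ∈ M.closure T) : v ∈ T := by
  rw [fundCircuit_eq_sInter (M.closure_subset_closure hTI hu)] at hv
  exact (mem_insert_iff.1 hv).resolve_left hvu T ⟨hTI, hu⟩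

lemma Indep.mem_closure_fundCircuit_inter (hI : M.Indep I) (hu : u ∈ M.closure I)
    (huI : u ∉ I) : u ∈ M.closure (M.fundCircuit u I ∩ I) := by
  rw [← fundCircuit_sdiff_eq_inter M huI]
  exact (hI.fundCircuit_isCircuit hu huI).mem_closure_sdiff_singleton_of_mem
    (M.mem_fundCircuit u I)

end Matroid

namespace AZ

variable {α : Type*} {M N : Matroid α} {I J R C : Set α} {u v z : α}

lemma circuit_iff_isCircuit : Circuit M C ↔ M.IsCircuit C := by
  rw [isCircuit_iff_forall_ssubset, Dep, Circuit]
  tauto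

lemma exists_circuit_iff_mem_fundCircuit (hI : M.Indep I) (hu : u ∈ M.closure I) (huI : u ∉ I) :
    (∃ C, Circuit M C ∧ C ⊆ insert u I ∧ u ∈ C ∧ v ∈ C) ↔ v ∈ M.fundCircuit u I := by
  constructor
  · rintro ⟨C, hC, hCI, -, hvC⟩
    rwa [← (circuit_iff_isCircuit.1 hC).eq_fundCircuit_of_subset hI hCI]
  · exact fun hv ↦ ⟨_, circuit_iff_isCircuit.2 (hI.fundCircuit_isCircuit hu huI),
      M.fundCircuit_subset_insert u I, M.mem_fundCircuit u I, hv⟩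

lemma closure_inter_eq_and_closure_diff_eq (hIfin : I.Finite) (hIM : M.Indep I)
    (hIN : N.Indep I) (hJM : M.Indep J) (hIJ : I ⊆ M.closure J) (hJI : J ⊆ M.closure I)
    (hMR : I ∩ R ⊆ M.closure (J ∩ R)) (hNR : I \ R ⊆ N.closure (J \ R)) :
    M.closure (I ∩ R) = M.closure (J ∩ R) ∧ N.closure (I \ R) = N.closure (J \ R) := by
  have hIMR := hIM.subset (inter_subset_left (t := R))
  have hINR := hIN.subset (sdiff_subset (t := R))
  have hsum : (I \ R).encard + (I ∩ R).encard = (J \ R).encard + (J ∩ R).encard := by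
    rw [encard_sdiff_add_encard_inter, encard_sdiff_add_encard_inter]
    exact (hIM.encard_le_encard_of_subset_closure hIJ).antisymm
      (hJM.encard_le_encard_of_subset_closure hJI)
  obtain ⟨hdiff, hinter⟩ := ENat.le_and_le_of_add_eq_add
    (hINR.encard_le_encard_of_subset_closure hNR) (hIMR.encard_le_encard_of_subset_closure hMR)
    hsum (by rw [encard_sdiff_add_encard_inter]; exact hIfin.encard_lt_top.ne)
  exact ⟨hIMR.closure_eq_closure_of_subset_closure_of_encard_le (hIfin.inter_of_left R) hMR hinter,
    hINR.closure_eq_closure_of_subset_closure_of_encard_le hIfin.sdiff hNR hdiff⟩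

lemma mem_closure_inter_reach (hJ : M.Indep J) (hz : z ∈ Reach M N J u)
    (hzcl : z ∈ M.closure J) : z ∈ M.closure (J ∩ Reach M N J u) := by
  by_cases hzJ : z ∈ J
  · exact M.subset_closure _ (inter_subset_left.trans hJ.subset_ground) ⟨hzJ, hz⟩
  have hsub : M.fundCircuit z J ∩ J ⊆ J ∩ Reach M N J u := fun w hw ↦
    ⟨hw.2, Relation.ReflTransGen.tail hz <| Or.inl ⟨⟨mem_ground_of_mem_closure hzcl, hzJ⟩, hw.2,
      hzcl, (exists_circuit_iff_mem_fundCircuit hJ hzcl hzJ).2 hw.1⟩⟩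
  exact M.closure_subset_closure hsub (hJ.mem_closure_fundCircuit_inter hzcl hzJ)

lemma mem_closure_diff_reach (hJ : N.Indep J) (hz : z ∉ Reach M N J u) (hzE : z ∈ M.E)
    (hzcl : z ∈ N.closure J) : z ∈ N.closure (J \ Reach M N J u) := by
  by_cases hzJ : z ∈ J
  · exact N.subset_closure _ (sdiff_subset.trans hJ.subset_ground) ⟨hzJ, hz⟩
  have hsub : N.fundCircuit z J ∩ J ⊆ J \ Reach M N J u := fun w hw ↦
    ⟨hw.2, fun hw' ↦ hz <| Relation.ReflTransGen.tail hw' <| Or.inr ⟨hw.2, ⟨hzE, hzJ⟩, hzcl,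
      (exists_circuit_iff_mem_fundCircuit hJ hzcl hzJ).2 hw.1⟩⟩
  exact N.closure_subset_closure hsub (hJ.mem_closure_fundCircuit_inter hzcl hzJ)

lemma reflTransGen_arc_of_sim (hIfin : I.Finite) (hIM : M.Indep I) (hIN : N.Indep I)
    (hJM : M.Indep J) (hJN : N.Indep J) (hsim : Sim M N I J) (harc : Arc M N I u v) :
    Relation.ReflTransGen (Arc M N J) u v := by
  by_contra hv
  change v ∉ Reach M N J u at hv
  set R := Reach M N J u
  have huR : u ∈ R := Relation.ReflTransGen.refl
  obtain ⟨hclM, hclN⟩ := closure_inter_eq_and_closure_diff_eq (R := R) hIfin hIM hIN hJM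
    (fun z hz ↦ (hsim.1 hz).1) (fun z hz ↦ (hsim.2 hz).1)
    (fun z hz ↦ mem_closure_inter_reach hJM hz.2 (hsim.1 hz.1).1)
    (fun z hz ↦ mem_closure_diff_reach hJN hz.2 (hIM.subset_ground hz.1) (hsim.1 hz.1).2)
  rcases harc with ⟨⟨-, huI⟩, hvI, hucl, hC⟩ | ⟨huI, ⟨hvE, hvI⟩, hvcl, hC⟩
  · have hvC := (exists_circuit_iff_mem_fundCircuit hIM hucl huI).1 hC
    have hu : u ∈ M.closure (I ∩ R) := hclM ▸ mem_closure_inter_reach hJM huR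
      (M.closure_subset_closure_of_subset_closure (fun z hz ↦ (hsim.1 hz).1) hucl)
    exact hv (mem_of_mem_fundCircuit hvC (ne_of_mem_of_not_mem hvI huI) inter_subset_left hu).2
  · have huC := (exists_circuit_iff_mem_fundCircuit hIN hvcl hvI).1 hC
    have hv' : v ∈ N.closure (I \ R) := hclN ▸ mem_closure_diff_reach hJN hv hvE
      (N.closure_subset_closure_of_subset_closure (fun z hz ↦ (hsim.1 hz).2) hvcl)
    exact (mem_of_mem_fundCircuit huC (ne_of_mem_of_not_mem huI hvI) sdiff_subset hv').2 huR

theorem statement12_general (M N : Matroid α) (I J : Set α) (hIfin : I.Finite) (hIM : M.Indep I)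
    (hIN : N.Indep I) (hJM : M.Indep J) (hJN : N.Indep J) (hsim : Sim M N I J)
    (x y : α) (hxy : Relation.ReflTransGen (Arc M N I) x y) :
    Relation.ReflTransGen (Arc M N J) x y :=
  hxy.lift' id fun _ _ ↦ reflTransGen_arc_of_sim hIfin hIM hIN hJM hJN hsim

/-- If `I ∼ J` and `y` is reachable from `x` by a directed path in `D(I)`, then `y` is
reachable from `x` by a directed path in `D(J)`. -/
theorem statement12 (M N : Matroid α) [M.Finitary] [N.Finitary] (hE : M.E = N.E)
    (I J : Set α) (hIfin : I.Finite) (hIM : M.Indep I) (hIN : N.Indep I)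
    (hJfin : J.Finite) (hJM : M.Indep J) (hJN : N.Indep J) (hsim : Sim M N I J)
    (x y : α) (hxy : Relation.ReflTransGen (Arc M N I) x y) :
    Relation.ReflTransGen (Arc M N J) x y :=
  statement12_general M N I J hIfin hIM hIN hJM hJN hsim x y hxy

end AZ
end
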